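/- arXiv:2605.02319 — 2 statements merged into one kernel-verified Lean document; each statement's English description precedes it below -/
import Mathlib

section
/- Let ε > 0 and X a finite set with |X| ≥ 2. If v is in the ε-LDP cone K_{X,ε}, v ≠ 0, and the kernel of the active constraint matrix of v equals span{v}, then letting a = min_x v_x and b = max_x v_x, we have b = e^ε · a and every coordinate v_x equals either a or b. Consequently v has the form v_x = c·e^ε for x in some nonempty proper subset Z ⊆ X and v_x = c otherwise, with c = a > 0. -/
open Classical in
theorem extreme_direction_form {X : Type*} [Fintype X] [Nonempty X]
    (hX : 2 ≤ Fintype.card X) (ε : ℝ) (hε : 0 < ε)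
    (v : X → ℝ) (hv0 : ∀ x, 0 ≤ v x)
    (hldp : ∀ x x' : X, Real.exp ε * v x ≥ v x') (hne : v ≠ 0)
    (hker : {u : X → ℝ |
        (∀ z z' : X, Real.exp ε * v z = v z' → Real.exp ε * u z = u z') ∧
        (∀ x : X, v x = 0 → u x = 0)} = Submodule.span ℝ {v}) :
    (Finset.univ.sup' Finset.univ_nonempty v = Real.exp ε * Finset.univ.inf' Finset.univ_nonempty v) ∧
    0 < Finset.univ.inf' Finset.univ_nonempty v ∧
    ∃ Z : Set X, Z.Nonempty ∧ Z ≠ Set.univ ∧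
      ∀ x, v x = if x ∈ Z then (Finset.univ.inf' Finset.univ_nonempty v) * Real.exp ε
                 else Finset.univ.inf' Finset.univ_nonempty v := by
  set a := Finset.univ.inf' Finset.univ_nonempty v with ha
  set b := Finset.univ.sup' Finset.univ_nonempty v with hb
  obtain ⟨xa, -, hxa⟩ := Finset.exists_mem_eq_inf' (Finset.univ_nonempty (α := X)) v
  obtain ⟨xb, -, hxb⟩ := Finset.exists_mem_eq_sup' (Finset.univ_nonempty (α := X)) v
  rw [← ha] at hxa
  rw [← hb] at hxb
  have hainf : ∀ x, a ≤ v x := fun x => Finset.inf'_le _ (Finset.mem_univ x)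
  have hbsup : ∀ x, v x ≤ b := fun x => Finset.le_sup' _ (Finset.mem_univ x)
  have hexp1 : (1 : ℝ) < Real.exp ε := by
    calc (1 : ℝ) = Real.exp 0 := Real.exp_zero.symm
    _ < Real.exp ε := Real.exp_lt_exp.mpr hε
  -- a > 0
  have ha0 : 0 < a := by
    rcases lt_or_eq_of_le (hv0 xa) with h | h
    · rw [hxa]; exact h
    · exfalso; apply hne; funext x
      have h1 := hldp xa x
      rw [← h, mul_zero] at h1
      exact le_antisymm h1 (hv0 x)
  have hvpos : ∀ x, 0 < v x := fun x => lt_of_lt_of_le ha0 (hainf x)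
  -- b ≤ e^ε a
  have hba : b ≤ Real.exp ε * a := by
    rw [hxa, hxb]; exact hldp xa xb
  -- active pairs have values a and b
  have hactive : ∀ z z' : X, Real.exp ε * v z = v z' → v z = a ∧ v z' = b := by
    intro z z' hzz
    have h1 : Real.exp ε * v z ≤ Real.exp ε * a := hzz ▸ le_trans (hbsup z') hba
    have h2 : v z ≤ a := le_of_mul_le_mul_left h1 (lt_trans one_pos hexp1)
    have h3 : v z = a := le_antisymm h2 (hainf z)
    refine ⟨h3, le_antisymm (hbsup z') ?_⟩
    rw [← hzz, h3]; exact hba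
  -- if a coordinate is in no active pair, its indicator contradicts the kernel
  have hind : ∀ x0 : X, (∀ z z' : X, Real.exp ε * v z = v z' → z ≠ x0 ∧ z' ≠ x0) → False := by
    intro x0 hno
    set u : X → ℝ := fun x => if x = x0 then 1 else 0 with hu
    have hmem : u ∈ {u : X → ℝ |
        (∀ z z' : X, Real.exp ε * v z = v z' → Real.exp ε * u z = u z') ∧
        (∀ x : X, v x = 0 → u x = 0)} := by
      constructor
      · intro z z' hzz
        obtain ⟨hz, hz'⟩ := hno z z' hzz
        simp [hu, hz, hz']
      · intro x hx
        exact absurd hx (ne_of_gt (hvpos x))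
    rw [hker] at hmem
    obtain ⟨c, hc⟩ := Submodule.mem_span_singleton.mp hmem
    obtain ⟨x1, hx1⟩ := Fintype.exists_ne_of_one_lt_card (lt_of_lt_of_le one_lt_two hX) x0
    have h1 : c * v x1 = 0 := by
      have := congrFun hc x1
      simpa [hu, hx1] using this
    have hc0 : c = 0 := by
      rcases mul_eq_zero.mp h1 with h | h
      · exact h
      · exact absurd h (ne_of_gt (hvpos x1))
    have h2 : c * v x0 = 1 := by
      have := congrFun hc x0
      simpa [hu] using this
    rw [hc0, zero_mul] at h2
    exact zero_ne_one h2
  -- an active pair exists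
  have hex : ∃ z z' : X, Real.exp ε * v z = v z' := by
    by_contra h
    push_neg at h
    exact hind xa (fun z z' hzz => absurd hzz (h z z'))
  obtain ⟨z, z', hzz⟩ := hex
  have hbea : b = Real.exp ε * a := by
    obtain ⟨h1, h2⟩ := hactive z z' hzz
    rw [← h2, ← hzz, h1]
  -- every coordinate equals a or b
  have hab : ∀ x, v x = a ∨ v x = b := by
    intro x
    by_contra h
    push_neg at h
    obtain ⟨h1, h2⟩ := h
    apply hind x
    intro w w' hww
    obtain ⟨hw, hw'⟩ := hactive w w' hww
    exact ⟨fun e => h1 (e ▸ hw), fun e => h2 (e ▸ hw')⟩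
  have haltb : a < b := by
    rw [hbea]
    nlinarith
  refine ⟨hbea, ha0, {x | v x = b}, ⟨xb, hxb.symm⟩, ?_, ?_⟩
  · intro h
    have : xa ∈ {x | v x = b} := h ▸ Set.mem_univ xa
    exact absurd (hxa ▸ this : a = b) (ne_of_lt haltb)
  · intro x
    by_cases hx : x ∈ {x | v x = b}
    · simp only [hx, if_pos]
      rw [Set.mem_setOf_eq] at hx
      rw [hx, hbea, mul_comm]
    · simp only [hx, if_neg]
      rw [Set.mem_setOf_eq] at hx
      rcases hab x with h | h
      · exact h
      · exact absurd h hx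
end

section
/- Let ε > 0, m ≥ 2, γ ∈ (0,1]. For the m-ary hypothesis testing problem with smoothed point masses P(x|θ) = (1−γ)/m + γ·δ_{x,θ} on X = [m], uniform prior, zero-one loss, and the subset selection channel Q with singleton subsets (Q_{y,x} = e^ε/(e^ε+m−1) if x = y, 1/(e^ε+m−1) otherwise, for y ∈ [m]), the optimal Bayesian risk of Q (minimizing over all decision rules) equals 1 − (1−γ)/m − γe^ε/(e^ε+m−1). -/
open Classical in
theorem optimal_bayes_risk_subset_selection (ε : ℝ) (hε : 0 < ε)
    (m : ℕ) (hm : 2 ≤ m) (γ : ℝ) (hγ0 : 0 < γ) (hγ1 : γ ≤ 1)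
    (P : Fin m → Fin m → ℝ)
    (hP : ∀ x θ, P x θ = (1 - γ) / m + if x = θ then γ else 0)
    (Q : Fin m → Fin m → ℝ)
    (hQ : ∀ y x, Q y x = if x = y then Real.exp ε / (Real.exp ε + m - 1)
                         else 1 / (Real.exp ε + m - 1)) :
    IsLeast
      {r : ℝ | ∃ d : Fin m → Fin m → ℝ,
        (∀ a y, 0 ≤ d a y) ∧ (∀ y, ∑ a, d a y = 1) ∧
        r = (1 / m) * ∑ θ, ∑ x, ∑ y, ∑ a,
              P x θ * Q y x * (if a = θ then 0 else 1) * d a y}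
      (1 - (1 - γ) / m - γ * Real.exp ε / (Real.exp ε + m - 1)) := by
  set E := Real.exp ε with hE
  have hE1 : 1 < E := by
    rw [hE]; calc (1:ℝ) = Real.exp 0 := Real.exp_zero.symm
    _ < Real.exp ε := Real.exp_lt_exp.mpr hε
  have hm2 : (2:ℝ) ≤ (m:ℝ) := by exact_mod_cast hm
  have hm0 : (0:ℝ) < (m:ℝ) := by linarith
  have hmne : (m:ℝ) ≠ 0 := ne_of_gt hm0
  have hD : 0 < E + m - 1 := by linarith
  have hDne : E + (m:ℝ) - 1 ≠ 0 := ne_of_gt hD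
  -- sum of an "if x = y then A else B" over Fin m
  have hsum : ∀ (A B : ℝ) (y : Fin m),
      ∑ x : Fin m, (if x = y then A else B) = A + ((m:ℝ) - 1) * B := by
    intro A B y
    have : ∀ x : Fin m, (if x = y then A else B)
        = (if x = y then A - B else 0) + B := by
      intro x; split <;> ring
    rw [Finset.sum_congr rfl fun x _ => this x, Finset.sum_add_distrib,
      Finset.sum_ite_eq' Finset.univ y (fun _ => A - B), Finset.sum_const]
    simp [Finset.card_univ]
    ring
  have hQsum : ∀ y : Fin m, ∑ x, Q y x = 1 := by
    intro y
    simp only [hQ]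
    rw [hsum]
    field_simp
    ring
  have hPQ : ∀ θ y : Fin m, ∑ x, P x θ * Q y x = (1 - γ) / m + γ * Q y θ := by
    intro θ y
    simp only [hP, add_mul, ite_mul, zero_mul]
    rw [Finset.sum_add_distrib, Finset.sum_ite_eq' Finset.univ θ (fun x => γ * Q y x),
      ← Finset.mul_sum, hQsum]
    simp
  have key : ∀ a y : Fin m,
      ∑ θ, ∑ x, P x θ * Q y x * (if a = θ then 0 else 1)
        = 1 - (1 - γ) / m - γ * Q y a := by
    intro a y
    have h1 : ∀ θ : Fin m, ∑ x, P x θ * Q y x * (if a = θ then 0 else 1)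
        = ((1 - γ) / m + γ * Q y θ) * (if a = θ then 0 else 1) := by
      intro θ; rw [← Finset.sum_mul, hPQ]
    rw [Finset.sum_congr rfl fun θ _ => h1 θ]
    have h2 : ∀ θ : Fin m, ((1 - γ) / m + γ * Q y θ) * (if a = θ then 0 else 1)
        = ((1 - γ) / m + γ * Q y θ) - (if θ = a then (1 - γ) / m + γ * Q y θ else 0) := by
      intro θ
      by_cases h : θ = a
      · subst h; simp
      · have h' : ¬ a = θ := fun hh => h hh.symm
        simp [h, h']
    rw [Finset.sum_congr rfl fun θ _ => h2 θ, Finset.sum_sub_distrib,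
      Finset.sum_ite_eq' Finset.univ a (fun θ => (1 - γ) / m + γ * Q y θ),
      Finset.sum_add_distrib, ← Finset.mul_sum, hQsum, Finset.sum_const]
    simp [Finset.card_univ]
    field_simp
    ring
  -- reorder sums
  have swap : ∀ f : Fin m → Fin m → Fin m → Fin m → ℝ,
      ∑ θ, ∑ x, ∑ y, ∑ a, f θ x y a = ∑ y, ∑ a, ∑ θ, ∑ x, f θ x y a := by
    intro f
    calc ∑ θ, ∑ x, ∑ y, ∑ a, f θ x y a
        = ∑ θ, ∑ y, ∑ x, ∑ a, f θ x y a :=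
          Finset.sum_congr rfl fun θ _ => Finset.sum_comm
      _ = ∑ y, ∑ θ, ∑ x, ∑ a, f θ x y a := Finset.sum_comm
      _ = ∑ y, ∑ θ, ∑ a, ∑ x, f θ x y a :=
          Finset.sum_congr rfl fun y _ => Finset.sum_congr rfl fun θ _ => Finset.sum_comm
      _ = ∑ y, ∑ a, ∑ θ, ∑ x, f θ x y a :=
          Finset.sum_congr rfl fun y _ => Finset.sum_comm
  have hrisk : ∀ d : Fin m → Fin m → ℝ,
      ∑ θ, ∑ x, ∑ y, ∑ a, P x θ * Q y x * (if a = θ then 0 else 1) * d a y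
        = ∑ y, ∑ a, (1 - (1 - γ) / m - γ * Q y a) * d a y := by
    intro d
    rw [swap (fun θ x y a => P x θ * Q y x * (if a = θ then 0 else 1) * d a y)]
    refine Finset.sum_congr rfl fun y _ => Finset.sum_congr rfl fun a _ => ?_
    rw [← key a y]
    rw [Finset.sum_mul]
    exact Finset.sum_congr rfl fun θ _ => (Finset.sum_mul _ _ _).symm
  have hQyy : ∀ y : Fin m, Q y y = E / (E + m - 1) := by
    intro y; rw [hQ]; simp
  have htarget : (1:ℝ) / m * ∑ y : Fin m, (1 - (1 - γ) / m - γ * Q y y)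
      = 1 - (1 - γ) / m - γ * E / (E + m - 1) := by
    rw [Finset.sum_congr rfl fun y _ => by rw [hQyy y], Finset.sum_const]
    simp [Finset.card_univ]
    field_simp
  constructor
  · -- membership: deterministic rule d a y = if a = y then 1 else 0
    refine ⟨fun a y => if a = y then 1 else 0, fun a y => by positivity, fun y => by simp, ?_⟩
    rw [hrisk, ← htarget]
    congr 1
    refine Finset.sum_congr rfl fun y _ => ?_
    rw [Finset.sum_congr rfl fun a _ => (by split <;> simp [*] :
      (1 - (1 - γ) / m - γ * Q y a) * (if a = y then 1 else 0)
        = if a = y then (1 - (1 - γ) / m - γ * Q y y) else 0)]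
    rw [Finset.sum_ite_eq' Finset.univ y (fun _ => 1 - (1 - γ) / m - γ * Q y y)]
    simp
  · -- lower bound
    rintro r ⟨d, hd0, hd1, rfl⟩
    rw [hrisk, ← htarget]
    have hmono : ∀ y, ∑ a, (1 - (1 - γ) / m - γ * Q y y) * d a y
        ≤ ∑ a, (1 - (1 - γ) / m - γ * Q y a) * d a y := by
      intro y
      refine Finset.sum_le_sum fun a _ => ?_
      refine mul_le_mul_of_nonneg_right ?_ (hd0 a y)
      have hQle : Q y a ≤ Q y y := by
        rw [hQ, hQ]
        simp only [if_pos rfl]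
        split
        · exact le_refl _
        · exact (div_le_div_iff_of_pos_right hD).mpr hE1.le
      linarith [mul_le_mul_of_nonneg_left hQle (le_of_lt hγ0)]
    have : ∑ y : Fin m, (1 - (1 - γ) / m - γ * Q y y)
        ≤ ∑ y, ∑ a, (1 - (1 - γ) / m - γ * Q y a) * d a y := by
      refine Finset.sum_le_sum fun y _ => ?_
      calc (1 - (1 - γ) / m - γ * Q y y)
          = ∑ a, (1 - (1 - γ) / m - γ * Q y y) * d a y := by
            rw [← Finset.mul_sum, hd1 y, mul_one]
        _ ≤ _ := hmono y
    have h1m : (0:ℝ) ≤ 1 / m := by positivity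
    calc (1:ℝ)/m * ∑ y : Fin m, (1 - (1 - γ) / m - γ * Q y y)
        ≤ 1/m * ∑ y, ∑ a, (1 - (1 - γ) / m - γ * Q y a) * d a y :=
          mul_le_mul_of_nonneg_left this h1m
      _ = _ := rfl
end
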